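/- arXiv:2202.05619 — 2 statements merged into one kernel-verified Lean document; each statement's English description precedes it below -/
import Mathlib

section
/- The inverse map σ̂ from SC configurations to GCD configurations (converting each coin at index i in agent p's sequence to the block (p,i,x) and giving every agent a copy of all blocks) satisfies σ(σ̂(c)) = c for every reachable SC configuration c, and is monotone: c ≤ c' implies σ̂(c) ≤ σ̂(c'). -/
/-- A coin block: (creator, index, optional coin payload); the 1-indexed
initial block has payload `none`. -/
abbrev CBlock (P C : Type) := P × ℕ × Option C

/-- `SigmaIs B p l` states that σ is defined on the set of blocks `B` for
agent `p` with value `l`: the `p`-blocks in `B` are exactly the consecutively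
indexed blocks `(p,1,⊥), (p,2,l₀), …, (p,n+1,l_{n-1})`, so that the coin
sequence extracted by σ is `l`. -/
def SigmaIs {P C : Type} (B : Set (CBlock P C)) (p : P) (l : List C) : Prop :=
  ∀ (i : ℕ) (x : Option C), ((p, i, x) ∈ B) ↔
    ((i = 1 ∧ x = none) ∨ (2 ≤ i ∧ x ≠ none ∧ l[i - 2]? = x))

/-- The map σ̂ from SC configurations to GCD configurations: each coin at
(1-based) position `i` in agent `q`'s sequence becomes the block
`(q, i+1, coin)`, agent `q` also gets the initial block `(q,1,⊥)`, and every
agent receives a copy of all blocks. -/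
def hatSigma {P C : Type} (c : P → List C) : P → Set (CBlock P C) :=
  fun _ => {b | (b.2.1 = 1 ∧ b.2.2 = none) ∨
    (2 ≤ b.2.1 ∧ b.2.2 ≠ none ∧ (c b.1)[b.2.1 - 2]? = b.2.2)}

/-- σ̂ is a right inverse of σ and is monotone: σ(σ̂(c)) = c for every SC
configuration c (expressed via `SigmaIs`), and c ≤ c' pointwise by prefix
implies σ̂(c) ≤ σ̂(c') pointwise by containment. -/
theorem stmt11 {P C : Type} (c c' : P → List C) :
    (∀ p, SigmaIs (hatSigma c p) p (c p)) ∧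
    ((∀ p, c p <+: c' p) → ∀ p, hatSigma c p ⊆ hatSigma c' p) := by
  constructor
  · intro p i x
    simp [SigmaIs, hatSigma, Set.mem_setOf_eq]
  · intro h p b hb
    rcases hb with h1 | ⟨h2, hne, hget⟩
    · exact Or.inl h1
    · refine Or.inr ⟨h2, hne, ?_⟩
      obtain ⟨t, ht⟩ := h b.1
      rw [← ht, List.getElem?_append_left]
      · exact hget
      · obtain ⟨y, hy⟩ := Option.ne_none_iff_exists'.mp hne
        rw [hy] at hget
        exact (List.getElem?_eq_some_iff.mp hget).1
end

section
/- An all-to-all dissemination protocol cannot be grassroots: if the protocol's liveness requires every correct agent to eventually know every block created by every other correct agent, then for P ⊂ P' the projection TS(P')/P contains runs in which members of P know blocks of members of P'\P, which are not runs of TS(P), but moreover TS(P) ⊄ TS(P')/P because liveness in TS(P') forces additional transitions on members of P, violating the grassroots inclusion. -/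
/-- A dissemination block tagged by its creator. -/
abbrev DBlock (A : Type*) := A × ℕ

/-- A correct run of an all-to-all dissemination protocol over the agent set
`P`: local states start empty and grow monotonically; only members of `P`
have nonempty states and only their blocks appear; every (correct) member of
`P` keeps creating new blocks; and all-to-all liveness holds: every block of
a member of `P` appearing in the run is eventually known to every member of
`P`. -/
def AllToAllRun {A : Type*} (P : Set A) (r : ℕ → A → Set (DBlock A)) : Prop :=
  (∀ p, r 0 p = ∅) ∧
  (∀ n p, r n p ⊆ r (n + 1) p) ∧
  (∀ p, p ∉ P → ∀ n, r n p = ∅) ∧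
  (∀ n p b, b ∈ r n p → b.1 ∈ P) ∧
  (∀ p ∈ P, ∀ n, ∃ m i, (p, i) ∈ r m p ∧ (p, i) ∉ r n p) ∧
  (∀ p ∈ P, ∀ q ∈ P, ∀ b : DBlock A, b.1 = q → (∃ n, b ∈ r n q) →
    ∃ m, b ∈ r m p)

/-- An all-to-all dissemination protocol cannot be grassroots: for nonempty
`P ⊊ P'`, it is not the case that every correct run of `TS(P)` is the
projection onto `P` of a correct run of `TS(P')` — the liveness of `TS(P')`
forces members of `P` to eventually know blocks of members of `P' \ P`,
which never appear in a run of `TS(P)`. Hence the grassroots inclusion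
`TS(P) ⊆ TS(P')/P` fails. -/
theorem stmt14 {A : Type*} (P P' : Set A) (hne : P.Nonempty) (hsub : P ⊂ P') :
    ¬ (∀ r : ℕ → A → Set (DBlock A), AllToAllRun P r →
        ∃ r' : ℕ → A → Set (DBlock A), AllToAllRun P' r' ∧
          ∀ n, ∀ p ∈ P, r' n p = r n p) := by
  intro h
  set r : ℕ → A → Set (DBlock A) :=
    fun n p => {b | p ∈ P ∧ b.1 ∈ P ∧ b.2 < n} with hr
  have hrun : AllToAllRun P r := by
    refine ⟨?_, ?_, ?_, ?_, ?_, ?_⟩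
    · intro p; ext b; simp [hr]
    · intro n p b hb
      simp only [hr, Set.mem_setOf_eq] at hb ⊢
      exact ⟨hb.1, hb.2.1, by omega⟩
    · intro p hp n; ext b; simp [hr, hp]
    · intro n p b hb; exact hb.2.1
    · intro p hp n
      exact ⟨n + 1, n, ⟨hp, hp, by omega⟩, fun hc => by simpa using hc.2.2⟩
    · rintro p hp q hq b hb ⟨n, hbn⟩
      exact ⟨n, hp, hbn.2⟩
  obtain ⟨r', ⟨h0, hmono, hout, hcr, hcreate, hlive⟩, hproj⟩ := h r hrun
  obtain ⟨q', hq'P', hq'P⟩ := Set.exists_of_ssubset hsub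
  obtain ⟨p, hp⟩ := hne
  obtain ⟨m, i, hmi, -⟩ := hcreate q' hq'P' 0
  obtain ⟨k, hk⟩ := hlive p (hsub.1 hp) q' hq'P' (q', i) rfl ⟨m, hmi⟩
  rw [hproj k p hp] at hk
  exact hq'P hk.2.1
end
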